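/- arXiv:1510.05291 — 7 statements merged into one kernel-verified Lean document; each statement's English description precedes it below -/
import Mathlib

section
/- If S is a semigroup that is both right simple and left cancellative (a right group), then for any nonempty set Λ and any map P : Λ → S, the semigroup (S, Λ, ∘_P) is both right simple and left cancellative. -/
/-- The kernel of the right regular representation: `(a,b) ∈ θ` iff `x*a = x*b` for all `x`. -/
def theta (S : Type*) [Semigroup S] : Con S :=
  { r := fun a b => ∀ x : S, x * a = x * b
    iseqv := ⟨fun _ _ => rfl, fun h x => (h x).symm, fun h1 h2 x => (h1 x).trans (h2 x)⟩
    mul' := by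
      intro a b c d hab hcd x
      calc x * (a * c) = (x * a) * c := (mul_assoc x a c).symm
        _ = (x * b) * c := by rw [hab x]
        _ = (x * b) * d := hcd (x * b)
        _ = x * (b * d) := mul_assoc x b d }

/-- `(a,b) ∈ θ*` iff `x*y*a = x*y*b` for all `x y`. -/
def thetaStar (S : Type*) [Semigroup S] : Con S :=
  { r := fun a b => ∀ x y : S, x * y * a = x * y * b
    iseqv := ⟨fun _ _ _ => rfl, fun h x y => (h x y).symm,
      fun h1 h2 x y => (h1 x y).trans (h2 x y)⟩
    mul' := by
      intro a b c d hab hcd x y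
      calc x * y * (a * c) = (x * y * a) * c := (mul_assoc (x*y) a c).symm
        _ = (x * y * b) * c := by rw [hab x y]
        _ = x * (y * b) * c := by rw [mul_assoc x y b]
        _ = x * (y * b) * d := hcd x (y * b)
        _ = (x * y * b) * d := by rw [mul_assoc x y b]
        _ = x * y * (b * d) := mul_assoc (x*y) b d }

/-- The operation of the semigroup `(S, Λ, ∘_P)`. -/
def opP {S Λ : Type*} [Semigroup S] (P : Λ → S) (p q : S × Λ) : S × Λ :=
  (p.1 * P p.2 * q.1, q.2)

/-- if S is right simple and left cancellative (a right group), so is `(S, Λ, ∘_P)`. -/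
theorem stmt_6 {S Λ : Type*} [Semigroup S] [Nonempty Λ] (P : Λ → S)
    (hrs : ∀ a t : S, ∃ x : S, a * x = t)
    (hlc : ∀ a b c : S, a * b = a * c → b = c) :
    (∀ p q : S × Λ, ∃ r : S × Λ, opP P p r = q) ∧
    (∀ p q r : S × Λ, opP P p q = opP P p r → q = r) := by
  constructor
  · rintro ⟨s, l⟩ ⟨t, m⟩
    obtain ⟨x, hx⟩ := hrs (s * P l) t
    exact ⟨(x, m), by simp [opP, hx]⟩
  · rintro ⟨s, l⟩ ⟨t, m⟩ ⟨u, n⟩ h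
    simp only [opP, Prod.mk.injEq] at h
    exact Prod.ext (hlc _ _ _ h.1) h.2
end

section
/- Let S be a semigroup, θ as above, and P : S/θ → S any section (P([a]_θ) ∈ [a]_θ). Let θ• be the congruence on T = (S, S/θ, ∘_P) defined by (u, v) ∈ θ• iff w ∘ u = w ∘ v for all w ∈ T. Let θ* be the congruence on S defined by (a,b) ∈ θ* iff x·y·a = x·y·b for all x, y ∈ S, and let P' : S/θ → S/θ* send [a]_θ to [a]_{θ*}. Then the map φ : T/θ• → (S/θ*, S/θ, ∘_{P'}) given by φ([(a, [b]_θ)]_{θ•}) = ([a]_{θ*}, [b]_θ) is a well-defined semigroup isomorphism; i.e., the right regular representation of (S, S/θ, ∘_P) is isomorphic to (S/θ*, S/θ, ∘_{P'}). -/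
/-- The kernel of the right regular representation of `(S, Λ, ∘_P)`, as a setoid. -/
def thetaBul {S Λ : Type*} [Semigroup S] (P : Λ → S) : Setoid (S × Λ) :=
  ⟨fun u v => ∀ w : S × Λ, opP P w u = opP P w v,
    ⟨fun _ _ => rfl, fun h w => (h w).symm, fun h1 h2 w => (h1 w).trans (h2 w)⟩⟩

/-- The natural projection `P' : S/θ → S/θ*`, well defined since `θ ⊆ θ*`. -/
def thetaProj (S : Type*) [Semigroup S] : (theta S).Quotient → (thetaStar S).Quotient :=
  Quotient.lift (fun a => (a : (thetaStar S).Quotient)) (by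
    intro a b h
    rw [Con.eq]
    intro x y
    calc x * y * a = x * (y * a) := mul_assoc x y a
      _ = x * (y * b) := by rw [h y]
      _ = x * y * b := (mul_assoc x y b).symm)

/-- the right regular representation of `(S, S/θ, ∘_P)` is isomorphic to
`(S/θ*, S/θ, ∘_{P'})`, via `φ([(a,[b]_θ)]) = ([a]_{θ*}, [b]_θ)`. -/
theorem stmt_8 {S : Type*} [Semigroup S] (P : (theta S).Quotient → S)
    (hP : ∀ q : (theta S).Quotient, (P q : (theta S).Quotient) = q) :
    ∃ φ : Quotient (thetaBul (Λ := (theta S).Quotient) P) →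
        (thetaStar S).Quotient × (theta S).Quotient,
      (∀ (a : S) (b : (theta S).Quotient),
          φ (Quotient.mk (thetaBul P) (a, b)) = ((a : (thetaStar S).Quotient), b)) ∧
      Function.Bijective φ ∧
      (∀ u v : S × (theta S).Quotient,
        φ (Quotient.mk (thetaBul P) (opP P u v)) =
          opP (thetaProj S) (φ (Quotient.mk (thetaBul P) u)) (φ (Quotient.mk (thetaBul P) v))) := by
  have hPrel : ∀ y : S, ∀ x : S, x * P ((y : (theta S).Quotient)) = x * y := by
    intro y
    exact (Con.eq (theta S)).mp (hP (y : (theta S).Quotient))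
  refine ⟨Quotient.lift (fun p : S × (theta S).Quotient =>
      ((p.1 : (thetaStar S).Quotient), p.2)) ?_, ?_, ?_, ?_⟩
  · intro u v h
    have h1 := h (u.1, u.2)
    simp only [opP, Prod.mk.injEq] at h1
    have hlam : u.2 = v.2 := h1.2
    have key : ∀ s : S, ∀ μ : (theta S).Quotient, s * P μ * u.1 = s * P μ * v.1 := by
      intro s μ
      have := h (s, μ)
      simp only [opP, Prod.mk.injEq] at this
      exact this.1
    have hstar : (thetaStar S) u.1 v.1 := by
      intro x y
      calc x * y * u.1 = x * P ((y : (theta S).Quotient)) * u.1 := by rw [hPrel y x]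
        _ = x * P ((y : (theta S).Quotient)) * v.1 := key x _
        _ = x * y * v.1 := by rw [hPrel y x]
    exact Prod.ext ((Con.eq (thetaStar S)).mpr hstar) hlam
  · intro a b; rfl
  · constructor
    · intro u v huv
      induction u using Quotient.ind with | _ u =>
      induction v using Quotient.ind with | _ v =>
      simp only [Quotient.lift_mk] at huv
      rw [Prod.mk.injEq] at huv
      have hlam : u.2 = v.2 := huv.2
      have hstar : (thetaStar S) u.1 v.1 := (Con.eq (thetaStar S)).mp huv.1
      apply Quotient.sound
      intro w
      unfold opP
      exact Prod.ext (hstar w.1 (P w.2)) hlam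
    · intro ⟨a, lam⟩
      induction a using Quotient.ind with | _ a =>
      exact ⟨Quotient.mk _ (a, lam), rfl⟩
  · intro u v
    obtain ⟨a, lam⟩ := u
    obtain ⟨c, mu⟩ := v
    induction lam using Quotient.ind with | _ y =>
    simp only [Quotient.lift_mk, opP]
    refine Prod.ext ?_ rfl
    show ((a * P _ * c : S) : (thetaStar S).Quotient) =
      (a : (thetaStar S).Quotient) * thetaProj S ⟦y⟧ * (c : (thetaStar S).Quotient)
    have h2 : thetaProj S ⟦y⟧ = (y : (thetaStar S).Quotient) := rfl
    rw [h2]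
    have h3 : ((a * P ((y : (theta S).Quotient)) * c : S) : (thetaStar S).Quotient)
        = ((a * y * c : S) : (thetaStar S).Quotient) := by
      apply (Con.eq (thetaStar S)).mpr
      intro x z
      calc x * z * (a * P ((y : (theta S).Quotient)) * c)
          = x * z * a * P ((y : (theta S).Quotient)) * c := by
            rw [← mul_assoc, ← mul_assoc]
        _ = x * z * a * y * c := by rw [hPrel y (x*z*a)]
        _ = x * z * (a * y * c) := by rw [← mul_assoc, ← mul_assoc]
    exact h3
end

section
/- A semigroup S is left equalizer simple (i.e., for all a, b ∈ S, if x₀·a = x₀·b for some x₀ ∈ S then x·a = x·b for all x ∈ S) if and only if its right regular representation S/θ is left cancellative, where θ is the congruence (a,b) ∈ θ iff x·a = x·b for all x ∈ S. -/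
/-- S is left equalizer simple iff S/θ is left cancellative. -/
theorem stmt_10 {S : Type*} [Semigroup S] :
    (∀ a b : S, (∃ x₀ : S, x₀ * a = x₀ * b) → ∀ x : S, x * a = x * b) ↔
    (∀ u v w : (theta S).Quotient, u * v = u * w → v = w) := by
  constructor
  · intro hles u v w huv
    induction u using Con.induction_on with | H a =>
    induction v using Con.induction_on with | H b =>
    induction w using Con.induction_on with | H c =>
    rw [← Con.coe_mul, ← Con.coe_mul, Con.eq] at huv
    apply (Con.eq _).mpr
    intro x
    exact hles b c ⟨a * a, by
      have := huv a
      simpa [mul_assoc] using this⟩ x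
  · intro hcanc a b ⟨x₀, hx⟩ x
    have : ((x₀ : (theta S).Quotient)) * (a : (theta S).Quotient)
        = (x₀ : (theta S).Quotient) * (b : (theta S).Quotient) := by
      rw [← Con.coe_mul, ← Con.coe_mul, hx]
    have := hcanc _ _ _ this
    exact (Con.eq _).mp this x
end

section
/- If S is a left equalizer simple semigroup, θ the congruence (a,b) ∈ θ iff ∀x, x·a = x·b, and P : S/θ → S a section with P([s]_θ) ∈ [s]_θ, then the semigroup (S, S/θ, ∘_P) is left equalizer simple. -/
/-- if S is left equalizer simple then so is `(S, S/θ, ∘_P)`. -/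
theorem stmt_12 {S : Type*} [Semigroup S]
    (h : ∀ a b : S, (∃ x₀ : S, x₀ * a = x₀ * b) → ∀ x : S, x * a = x * b)
    (P : (theta S).Quotient → S)
    (hP : ∀ q : (theta S).Quotient, (P q : (theta S).Quotient) = q) :
    ∀ p q : S × (theta S).Quotient,
      (∃ w₀ : S × (theta S).Quotient, opP P w₀ p = opP P w₀ q) →
      ∀ w : S × (theta S).Quotient, opP P w p = opP P w q := by
  rintro p q ⟨w₀, hw₀⟩ w
  simp only [opP, Prod.mk.injEq] at hw₀ ⊢
  exact ⟨h p.1 q.1 ⟨_, hw₀.1⟩ _, hw₀.2⟩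
end

section
/- If S'' is a left simple semigroup (S''·a = S'' for all a ∈ S''), Λ a nonempty set, and P'' : Λ → S'' a map, then the semigroup (S'', Λ, ∘_{P''}) is simple, i.e., it has no proper two-sided ideals. -/
/-- if S'' is left simple then `(S'', Λ, ∘_{P''})` is simple: its only two-sided
ideal is the whole semigroup. -/
theorem stmt_16 {S'' Λ : Type*} [Semigroup S''] [Nonempty Λ] (P'' : Λ → S'')
    (hls : ∀ a t : S'', ∃ x : S'', x * a = t) :
    ∀ I : Set (S'' × Λ), I.Nonempty →
      (∀ p ∈ I, ∀ t : S'' × Λ, opP P'' t p ∈ I ∧ opP P'' p t ∈ I) →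
      I = Set.univ := by
  intro I ⟨p, hp⟩ hI
  ext ⟨t, μ⟩
  simp only [Set.mem_univ, iff_true]
  obtain ⟨ν⟩ := ‹Nonempty Λ›
  -- q := p ∘ (t, μ) ∈ I
  have hq : opP P'' p (t, μ) ∈ I := (hI p hp (t, μ)).2
  set q := opP P'' p (t, μ) with hqdef
  obtain ⟨x, hx⟩ := hls (P'' ν * q.1) t
  have h2 : opP P'' (x, ν) q ∈ I := (hI q hq (x, ν)).1
  have : opP P'' (x, ν) q = (t, μ) := by
    have : x * P'' ν * q.1 = t := by rw [mul_assoc]; exact hx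
    simp only [opP] at this ⊢
    rw [this]; rfl
  rwa [this] at h2
end

section
/- If S'' is a left simple semigroup, Λ a nonempty set, and P'' : Λ → S'' a map, then for each fixed μ ∈ Λ, the set S'' × {μ} is a minimal left ideal of the semigroup (S'', Λ, ∘_{P''}). -/
/-- if S'' is left simple then for each `μ`, the set `S'' × {μ}` is a minimal
left ideal of `(S'', Λ, ∘_{P''})`. -/
theorem stmt_17 {S'' Λ : Type*} [Semigroup S''] [Nonempty Λ] (P'' : Λ → S'')
    (hls : ∀ a t : S'', ∃ x : S'', x * a = t) (μ : Λ) :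
    (∀ p ∈ {p : S'' × Λ | p.2 = μ}, ∀ t : S'' × Λ, opP P'' t p ∈ {p : S'' × Λ | p.2 = μ}) ∧
    (∀ J : Set (S'' × Λ), J ⊆ {p : S'' × Λ | p.2 = μ} → J.Nonempty →
      (∀ p ∈ J, ∀ t : S'' × Λ, opP P'' t p ∈ J) → J = {p : S'' × Λ | p.2 = μ}) := by
  constructor
  · intro p hp t
    exact hp
    
  · intro J hsub ⟨q, hq⟩ hideal
    apply Set.Subset.antisymm hsub
    intro p hp
    obtain ⟨l⟩ : Nonempty Λ := inferInstance
    obtain ⟨x, hx⟩ := hls (P'' l * q.1) p.1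
    have := hideal q hq (x, l)
    have hq2 : q.2 = μ := hsub hq
    have hop : opP P'' (x, l) q = p := by
      have : p = (p.1, μ) := by rw [← hp]
      rw [this]
      simp [opP, hq2, mul_assoc, ← hx, mul_assoc]
    rwa [hop] at this
end

section
/- If a semigroup S is M-inversive (for each a ∈ S there exist x, y ∈ S such that a·x and y·a are middle units, where an element a is a middle unit if c·a·d = c·d for all c, d ∈ S), then its right regular representation S/θ is right simple, where θ is the congruence (a,b) ∈ θ iff u·a = u·b for all u ∈ S. -/
/-- if S is M-inversive then its right regular representation S/θ is right
simple. -/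
theorem stmt_19 {S : Type*} [Semigroup S]
    (hM : ∀ a : S, ∃ x y : S,
      (∀ c d : S, c * (a * x) * d = c * d) ∧ (∀ c d : S, c * (y * a) * d = c * d)) :
    ∀ u t : (theta S).Quotient, ∃ x : (theta S).Quotient, u * x = t := by
  intro u t
  induction u using Con.induction_on with
  | H a =>
  induction t using Con.induction_on with
  | H b =>
  obtain ⟨x, y, hx, _⟩ := hM a
  refine ⟨(x * b : S), ?_⟩
  rw [← Con.coe_mul, Con.eq]
  intro c
  calc c * (a * (x * b)) = c * (a * x) * b := by simp only [mul_assoc]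
    _ = c * b := hx c b
end
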